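/- arXiv:2208.14718 — 2 statements merged into one kernel-verified Lean document; each statement's English description precedes it below -/
import Mathlib

section
/- Let σ : A* → B* be a non-erasing morphism. If there exists a neutral bi-infinite word x over A such that σ(x) is a neutral bi-infinite word over B, then Card B ≤ Card A. -/
open List

variable {A : Type*} {B : Type*} {C : Type*}

/-- `w` is a factor of the bi-infinite word `x`. -/
def IsFactor (x : ℤ → A) (w : List A) : Prop :=
  ∃ i : ℤ, ∀ j : Fin w.length, x (i + (j : ℕ)) = w.get j

/-- Left extensions `E⁻_x(w)`. -/
def extL (x : ℤ → A) (w : List A) : Set A := {a | IsFactor x (a :: w)}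

/-- Right extensions `E⁺_x(w)`. -/
def extR (x : ℤ → A) (w : List A) : Set A := {b | IsFactor x (w ++ [b])}

/-- Bi-extensions `E_x(w)`. -/
def extB (x : ℤ → A) (w : List A) : Set (A × A) :=
  {p | IsFactor x (p.1 :: (w ++ [p.2]))}

/-- The multiplicity `m_x(w)`. -/
noncomputable def mult (x : ℤ → A) (w : List A) : ℤ :=
  ((extB x w).ncard : ℤ) - (extL x w).ncard - (extR x w).ncard + 1

/-- The extension graph `𝓔_x(w)`: bipartite graph on the disjoint union of
`E⁻_x(w)` and `E⁺_x(w)`, with an edge between left vertex `a` and right vertex `b`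
iff `(a, b) ∈ E_x(w)`. -/
def extGraph (x : ℤ → A) (w : List A) :
    SimpleGraph ({a : A // a ∈ extL x w} ⊕ {b : A // b ∈ extR x w}) :=
  SimpleGraph.fromRel fun u v =>
    ∃ (a : {a : A // a ∈ extL x w}) (b : {b : A // b ∈ extR x w}),
      u = Sum.inl a ∧ v = Sum.inr b ∧ (a.1, b.1) ∈ extB x w

/-- The factor complexity `p_x(n)`. -/
noncomputable def cplx (x : ℤ → A) (n : ℕ) : ℕ :=
  Set.ncard {w : List A | IsFactor x w ∧ w.length = n}

/-- Application of a morphism (given by its values on letters) to a finite word. -/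
def appw (σ : A → List B) (w : List A) : List B := (w.map σ).flatten

/-- `y` is the image of the bi-infinite word `x` under the (non-erasing) morphism `σ`,
i.e. `y = ⋯σ(x_{-1})σ(x_0)σ(x_1)⋯`, anchored so that `σ(x_0)` starts at position `0`. -/
def IsImage (σ : A → List B) (x : ℤ → A) (y : ℤ → B) : Prop :=
  ∃ t : ℤ → ℤ, t 0 = 0 ∧ (∀ n : ℤ, t (n + 1) = t n + (σ (x n)).length) ∧
    ∀ (n : ℤ) (j : Fin (σ (x n)).length), y (t n + (j : ℕ)) = (σ (x n)).get j

/-- The width `‖σ‖` of a morphism. -/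
noncomputable def width [Fintype A] (σ : A → List B) : ℕ :=
  Finset.univ.sup fun a => (σ a).length

namespace Stmt8

open scoped Classical

/-! ### Basic facts about factors -/

lemma isFactor_nil (z : ℤ → C) : IsFactor z [] :=
  ⟨0, fun j => Fin.elim0 j⟩

lemma isFactor_of_surj {z : ℤ → C} (hz : Function.Surjective z) (c : C) :
    IsFactor z [c] := by
  obtain ⟨i, rfl⟩ := hz c
  refine ⟨i, fun j => ?_⟩
  have h1 : (j : ℕ) < 1 := by simpa using j.2
  have h0 : (j : ℕ) = 0 := by omega
  simp [h0]

lemma isFactor_infix {z : ℤ → C} {u w : List C} (h : IsFactor z u) (hw : w <:+: u) :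
    IsFactor z w := by
  obtain ⟨s, t2, rfl⟩ := hw
  obtain ⟨i, hi⟩ := h
  refine ⟨i + s.length, fun j => ?_⟩
  have hj : s.length + (j : ℕ) < (s ++ w ++ t2).length := by
    simp only [List.length_append]
    omega
  have := hi ⟨s.length + (j : ℕ), hj⟩
  have hget : (s ++ w ++ t2).get ⟨s.length + (j : ℕ), hj⟩ = w.get j := by
    simp only [List.get_eq_getElem]
    rw [List.getElem_append_left (by simp only [List.length_append]; omega)]
    rw [List.getElem_append_right (by omega)]
    simp
  rw [hget] at this
  rw [← this]
  congr 1
  push_cast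
  ring

lemma isFactor_of_cons {z : ℤ → C} {w : List C} {c : C} (h : IsFactor z (c :: w)) :
    IsFactor z w :=
  isFactor_infix h ⟨[c], [], by simp⟩

lemma isFactor_of_concat {z : ℤ → C} {w : List C} {c : C} (h : IsFactor z (w ++ [c])) :
    IsFactor z w :=
  isFactor_infix h ⟨[], [c], by simp⟩

lemma isFactor_extR {z : ℤ → C} {w : List C} (h : IsFactor z w) :
    ∃ c, IsFactor z (w ++ [c]) := by
  obtain ⟨i, hi⟩ := h
  refine ⟨z (i + w.length), i, fun j => ?_⟩
  rcases Nat.lt_or_ge (j : ℕ) w.length with hj | hj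
  · have := hi ⟨j, hj⟩
    simp only [List.get_eq_getElem] at this ⊢
    rw [List.getElem_append_left hj]
    exact this
  · have hj' : (j : ℕ) < w.length + 1 := by simpa using j.2
    have hj2 : (j : ℕ) = w.length := by omega
    simp only [List.get_eq_getElem]
    rw [List.getElem_append_right (by omega)]
    simp [hj2]

lemma isFactor_extL {z : ℤ → C} {w : List C} (h : IsFactor z w) :
    ∃ c, IsFactor z (c :: w) := by
  obtain ⟨i, hi⟩ := h
  refine ⟨z (i - 1), i - 1, fun j => ?_⟩
  rcases Nat.eq_zero_or_pos (j : ℕ) with hj | hj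
  · simp only [List.get_eq_getElem, hj]
    simp
  · have hj' : (j : ℕ) < w.length + 1 := by simpa using j.2
    have hj2 : (j : ℕ) - 1 < w.length := by omega
    have := hi ⟨(j : ℕ) - 1, hj2⟩
    simp only [List.get_eq_getElem] at this ⊢
    rw [List.getElem_cons]
    split
    · omega
    · rw [← this]
      congr 1
      omega

lemma finite_factors (z : ℤ → C) [Finite C] (n : ℕ) :
    {w : List C | IsFactor z w ∧ w.length = n}.Finite :=
  (List.finite_length_le C n).subset (fun w hw => by simp [hw.2])

/-! ### Finset versions of extension sets -/

section Cards

variable (z : ℤ → C) [Fintype C]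

noncomputable def FL (w : List C) : Finset C := (Set.toFinite (extL z w)).toFinset
noncomputable def FR (w : List C) : Finset C := (Set.toFinite (extR z w)).toFinset
noncomputable def FB (w : List C) : Finset (C × C) := (Set.toFinite (extB z w)).toFinset

variable {z}

lemma mem_FL {w : List C} {c : C} : c ∈ FL z w ↔ IsFactor z (c :: w) := by
  simp [FL, extL]

lemma mem_FR {w : List C} {c : C} : c ∈ FR z w ↔ IsFactor z (w ++ [c]) := by
  simp [FR, extR]

lemma mem_FB {w : List C} {p : C × C} : p ∈ FB z w ↔ IsFactor z (p.1 :: (w ++ [p.2])) := by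
  simp [FB, extB]

lemma FR_card_pos {w : List C} (h : IsFactor z w) : 1 ≤ (FR z w).card := by
  obtain ⟨c, hc⟩ := isFactor_extR h
  exact Finset.card_pos.2 ⟨c, mem_FR.2 hc⟩

/-- Neutrality as a `ℕ`-equation on finset cards. -/
lemma neutral_card {w : List C} (hm : mult z w = 0) :
    (FB z w).card + 1 = (FL z w).card + (FR z w).card := by
  have hB : (extB z w).ncard = (FB z w).card := Set.ncard_eq_toFinset_card _ _
  have hL : (extL z w).ncard = (FL z w).card := Set.ncard_eq_toFinset_card _ _
  have hR : (extR z w).ncard = (FR z w).card := Set.ncard_eq_toFinset_card _ _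
  unfold mult at hm
  rw [hB, hL, hR] at hm
  omega

/-- `E(w)` decomposes over left extensions. -/
lemma FB_eq_biUnion (w : List C) :
    FB z w = (FL z w).biUnion (fun c => (FR z (c :: w)).image (fun b => (c, b))) := by
  classical
  ext p
  simp only [Finset.mem_biUnion, Finset.mem_image, mem_FB, mem_FL, mem_FR]
  constructor
  · intro h
    refine ⟨p.1, ?_, p.2, ?_, rfl⟩
    · exact isFactor_of_concat (w := p.1 :: w) (by simpa using h)
    · simpa using h
  · rintro ⟨c, _, b, hb, rfl⟩
    simpa using hb

lemma FB_card_eq_sum (w : List C) :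
    (FB z w).card = ∑ c ∈ FL z w, (FR z (c :: w)).card := by
  classical
  rw [FB_eq_biUnion]
  rw [Finset.card_biUnion]
  · refine Finset.sum_congr rfl fun c _ => ?_
    exact Finset.card_image_of_injective _ (fun b b' h => by simpa using h)
  · intro c _ c' _ hcc
    simp only [Finset.disjoint_left, Finset.mem_image]
    rintro p ⟨b, _, rfl⟩ ⟨b', _, h⟩
    exact hcc (by simpa using congrArg Prod.fst h.symm)

/-- The conservation law for neutral words. -/
lemma conservation {w : List C} (hw : IsFactor z w)
    (hm : mult z w = 0) :
    ∑ c ∈ FL z w, ((FR z (c :: w)).card - 1) = (FR z w).card - 1 := by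
  classical
  have h1 : ∑ c ∈ FL z w, (FR z (c :: w)).card
      = ∑ c ∈ FL z w, (((FR z (c :: w)).card - 1) + 1) := by
    refine Finset.sum_congr rfl fun c hc => ?_
    have := FR_card_pos (mem_FL.1 hc)
    omega
  rw [Finset.sum_add_distrib, Finset.sum_const, smul_eq_mul, mul_one] at h1
  have h2 := FB_card_eq_sum (z := z) w
  have h3 := neutral_card (z := z) (w := w) hm
  have h4 := FR_card_pos hw
  omega

end Cards

/-! ### Complexity of a neutral word -/

section Cplx

variable (z : ℤ → C) [Fintype C]

noncomputable def LF (n : ℕ) : Finset (List C) :=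
  (finite_factors z n).toFinset

variable {z}

lemma mem_LF {n : ℕ} {w : List C} : w ∈ LF z n ↔ IsFactor z w ∧ w.length = n := by
  simp [LF]

lemma LF_zero : LF z 0 = {([] : List C)} := by
  ext w
  simp only [mem_LF, Finset.mem_singleton, List.length_eq_zero_iff]
  constructor
  · rintro ⟨_, rfl⟩; rfl
  · rintro rfl; exact ⟨isFactor_nil z, rfl⟩

lemma LF_one (hz : Function.Surjective z) :
    LF z 1 = Finset.univ.image (fun c => [c]) := by
  ext w
  simp only [mem_LF, Finset.mem_image, Finset.mem_univ, true_and]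
  constructor
  · rintro ⟨hw, hl⟩
    rcases w with _ | ⟨c, w⟩
    · simp at hl
    · rcases w with _ | _
      · exact ⟨c, rfl⟩
      · simp at hl
  · rintro ⟨c, rfl⟩
    exact ⟨isFactor_of_surj hz c, rfl⟩

lemma card_LF_zero : (LF z 0).card = 1 := by rw [LF_zero]; simp

lemma card_LF_one (hz : Function.Surjective z) : (LF z 1).card = Fintype.card C := by
  rw [LF_one hz, Finset.card_image_of_injective _ (fun c c' h => by simpa using h)]
  simp

lemma LF_succ_concat (n : ℕ) :
    LF z (n + 1) = (LF z n).biUnion (fun w => (FR z w).image (fun c => w ++ [c])) := by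
  ext u
  simp only [mem_LF, Finset.mem_biUnion, Finset.mem_image, mem_FR]
  constructor
  · rintro ⟨hu, hl⟩
    have hne : u ≠ [] := by rintro rfl; simp at hl
    refine ⟨u.dropLast, ⟨?_, by simp [List.length_dropLast, hl]⟩, u.getLast hne, ?_,
      List.dropLast_append_getLast hne⟩
    · exact isFactor_of_concat (by rwa [List.dropLast_append_getLast hne])
    · rwa [List.dropLast_append_getLast hne]
  · rintro ⟨w, ⟨hw, hl⟩, c, hc, rfl⟩
    exact ⟨hc, by simp [hl]⟩

lemma card_LF_succ_concat (n : ℕ) :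
    (LF z (n + 1)).card = ∑ w ∈ LF z n, (FR z w).card := by
  rw [LF_succ_concat, Finset.card_biUnion]
  · exact Finset.sum_congr rfl fun w _ =>
      Finset.card_image_of_injective _ (fun c c' h => by simpa using h)
  · intro w _ w' _ hww
    simp only [Finset.disjoint_left, Finset.mem_image]
    rintro u ⟨c, _, rfl⟩ ⟨c', _, h⟩
    exact hww (by simpa using congrArg List.dropLast h.symm)

lemma LF_succ_cons (n : ℕ) :
    LF z (n + 1) = (LF z n).biUnion (fun w => (FL z w).image (fun c => c :: w)) := by
  ext u
  simp only [mem_LF, Finset.mem_biUnion, Finset.mem_image, mem_FL]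
  constructor
  · rintro ⟨hu, hl⟩
    rcases u with _ | ⟨c, w⟩
    · simp at hl
    · exact ⟨w, ⟨isFactor_of_cons hu, by simpa using hl⟩, c, hu, rfl⟩
  · rintro ⟨w, ⟨hw, hl⟩, c, hc, rfl⟩
    exact ⟨hc, by simp [hl]⟩

lemma card_LF_succ_cons (n : ℕ) :
    (LF z (n + 1)).card = ∑ w ∈ LF z n, (FL z w).card := by
  rw [LF_succ_cons, Finset.card_biUnion]
  · exact Finset.sum_congr rfl fun w _ =>
      Finset.card_image_of_injective _ (fun c c' h => by simpa using h)
  · intro w _ w' _ hww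
    simp only [Finset.disjoint_left, Finset.mem_image]
    rintro u ⟨c, _, rfl⟩ ⟨c', _, h⟩
    exact hww (by simpa using congrArg List.tail h.symm)

lemma LF_two_step (n : ℕ) :
    LF z (n + 2) = (LF z n).biUnion
      (fun w => (FB z w).image (fun p => p.1 :: (w ++ [p.2]))) := by
  ext u
  simp only [mem_LF, Finset.mem_biUnion, Finset.mem_image, mem_FB]
  constructor
  · rintro ⟨hu, hl⟩
    rcases u with _ | ⟨c, v⟩
    · simp at hl
    · have hvne : v ≠ [] := by rintro rfl; simp at hl
      have hv : v = v.dropLast ++ [v.getLast hvne] := (List.dropLast_append_getLast hvne).symm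
      refine ⟨v.dropLast, ⟨?_, ?_⟩, (c, v.getLast hvne), ?_, by rw [← hv]⟩
      · refine isFactor_infix hu ⟨[c], [v.getLast hvne], ?_⟩
        rw [List.append_assoc, ← hv]
        simp
      · have : v.length = n + 1 := by simpa using hl
        simp [this]
      · simpa [← hv] using hu
  · rintro ⟨w, ⟨hw, hl⟩, p, hp, rfl⟩
    exact ⟨hp, by simp [hl]⟩

lemma card_LF_two_step (n : ℕ) :
    (LF z (n + 2)).card = ∑ w ∈ LF z n, (FB z w).card := by
  rw [LF_two_step, Finset.card_biUnion]
  · refine Finset.sum_congr rfl fun w _ => Finset.card_image_of_injective _ ?_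
    intro p p' h
    replace h : p.1 :: (w ++ [p.2]) = p'.1 :: (w ++ [p'.2]) := h
    have h1 := congrArg List.head? h
    simp at h1
    have h2 : p.2 = p'.2 := by
      have h3 := congrArg List.getLast? h
      rw [← List.cons_append, ← List.cons_append (a := p'.1), List.getLast?_concat,
        List.getLast?_concat] at h3
      simpa using h3
    exact Prod.ext h1 h2
  · intro w _ w' _ hww
    simp only [Finset.disjoint_left, Finset.mem_image]
    rintro u ⟨p, _, rfl⟩ ⟨p', _, h⟩
    apply hww
    have := congrArg (fun l => l.tail.dropLast) h.symm
    simpa using this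

/-- The complexity recurrence for a neutral word. -/
lemma card_LF_rec (hneu : ∀ w, IsFactor z w → mult z w = 0) (n : ℕ) :
    (LF z (n + 2)).card + (LF z n).card = 2 * (LF z (n + 1)).card := by
  have h1 : (LF z (n + 2)).card + (LF z n).card
      = ∑ w ∈ LF z n, ((FB z w).card + 1) := by
    rw [card_LF_two_step, Finset.sum_add_distrib, Finset.sum_const, smul_eq_mul, mul_one]
  have h2 : ∑ w ∈ LF z n, ((FB z w).card + 1)
      = ∑ w ∈ LF z n, ((FL z w).card + (FR z w).card) := by
    refine Finset.sum_congr rfl fun w hw => ?_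
    exact neutral_card (hneu w (mem_LF.1 hw).1)
  rw [h1, h2, Finset.sum_add_distrib, ← card_LF_succ_cons, ← card_LF_succ_concat]
  ring

lemma card_LF_step (hz : Function.Surjective z)
    (hneu : ∀ w, IsFactor z w → mult z w = 0) (n : ℕ) :
    (LF z (n + 1)).card = (LF z n).card + (Fintype.card C - 1) := by
  induction n with
  | zero =>
    rw [card_LF_zero, card_LF_one hz]
    have : 1 ≤ Fintype.card C := Fintype.card_pos_iff.2 ⟨z 0⟩
    omega
  | succ n ih =>
    have h := card_LF_rec hneu n
    have he : n + 1 + 1 = n + 2 := rfl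
    rw [he]
    omega

lemma card_LF_formula (hz : Function.Surjective z)
    (hneu : ∀ w, IsFactor z w → mult z w = 0) (n : ℕ) :
    (LF z n).card = (Fintype.card C - 1) * n + 1 := by
  induction n with
  | zero => simpa using card_LF_zero
  | succ n ih =>
    rw [card_LF_step hz hneu, ih]
    ring

end Cplx

/-! ### The sigma-length function -/

section Llen

variable (σ : A → List B)

def llen (w : List A) : ℕ := (appw σ w).length

lemma llen_nil : llen σ ([] : List A) = 0 := rfl

lemma llen_append (u v : List A) : llen σ (u ++ v) = llen σ u + llen σ v := by
  simp [llen, appw]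

lemma llen_cons (c : A) (w : List A) : llen σ (c :: w) = (σ c).length + llen σ w := by
  simp [llen, appw]

lemma llen_singleton (c : A) : llen σ [c] = (σ c).length := by
  simp [llen, appw]

variable {σ}

lemma llen_eq_zero (hσ : ∀ a, σ a ≠ []) {w : List A} (h : llen σ w = 0) : w = [] := by
  cases w with
  | nil => rfl
  | cons c w =>
    rw [llen_cons] at h
    have := List.length_pos_iff.2 (hσ c)
    omega

lemma len_le_llen (hσ : ∀ a, σ a ≠ []) (w : List A) : w.length ≤ llen σ w := by
  induction w with
  | nil => simp [llen_nil]
  | cons c w ih =>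
    rw [llen_cons]
    have := List.length_pos_iff.2 (hσ c)
    simp only [List.length_cons]
    omega

variable (σ)

/-- σ-length of the first letter. -/
def hdl (w : List A) : ℕ := llen σ w - llen σ w.tail

/-- σ-length of the last letter. -/
def lstl (w : List A) : ℕ := llen σ w - llen σ w.dropLast

variable {σ}

lemma hdl_cons (c : A) (w : List A) : hdl σ (c :: w) = (σ c).length := by
  simp [hdl, llen_cons]

lemma lstl_concat (w : List A) (c : A) : lstl σ (w ++ [c]) = (σ c).length := by
  simp [lstl, llen_append, llen_singleton, List.dropLast_concat]

lemma hdl_concat {w : List A} (hw : w ≠ []) (c : A) : hdl σ (w ++ [c]) = hdl σ w := by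
  rcases w with _ | ⟨d, w⟩
  · simp at hw
  · simp [hdl, llen_cons, llen_append]

lemma llen_tail_add_hdl {w : List A} (hw : w ≠ []) :
    llen σ w = llen σ w.tail + hdl σ w := by
  rcases w with _ | ⟨d, w⟩
  · simp at hw
  · simp [hdl, llen_cons]
    omega

lemma llen_dropLast_add_lstl {w : List A} (hw : w ≠ []) :
    llen σ w = llen σ w.dropLast + lstl σ w := by
  have h : w.dropLast ++ [w.getLast hw] = w := List.dropLast_append_getLast hw
  have h2 : llen σ w = llen σ w.dropLast + (σ (w.getLast hw)).length := by
    conv_lhs => rw [← h]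
    rw [llen_append, llen_singleton]
  unfold lstl
  omega

lemma hdl_le_width [Fintype A] {w : List A} : hdl σ w ≤ width σ := by
  rcases w with _ | ⟨c, w⟩
  · exact Nat.zero_le _
  · rw [hdl_cons]
    unfold width
    exact Finset.le_sup (f := fun a => (σ a).length) (Finset.mem_univ c)

lemma lstl_le_width [Fintype A] {w : List A} : lstl σ w ≤ width σ := by
  rcases eq_or_ne w [] with rfl | hw
  · exact Nat.zero_le _
  · have h : w.dropLast ++ [w.getLast hw] = w := List.dropLast_append_getLast hw
    rw [← h, lstl_concat]
    unfold width
    exact Finset.le_sup (f := fun a => (σ a).length) (Finset.mem_univ _)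

lemma one_le_lstl (hσ : ∀ a, σ a ≠ []) {w : List A} (hw : w ≠ []) : 1 ≤ lstl σ w := by
  have h : w.dropLast ++ [w.getLast hw] = w := List.dropLast_append_getLast hw
  rw [← h, lstl_concat]
  exact List.length_pos_iff.2 (hσ _)

lemma one_le_llen (hσ : ∀ a, σ a ≠ []) {w : List A} (hw : w ≠ []) : 1 ≤ llen σ w := by
  have := len_le_llen hσ w
  have := List.length_pos_iff.2 hw
  omega

end Llen

/-! ### The cut lemma -/

section Cut

variable (σ : A → List B) (x : ℤ → A) [Fintype A]

/-- Weight: number of right extensions minus one. -/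
noncomputable def omg (w : List A) : ℕ := (FR x w).card - 1

/-- The cut at level `r` in the suffix tree (first-letter crossing). -/
noncomputable def cutF (r : ℕ) : Finset (List A) :=
  Set.Finite.toFinset
    (s := {w | (IsFactor x w ∧ w ≠ [] ∧ llen σ w.tail < r ∧ r ≤ llen σ w) ∧ w.length ≤ r})
    ((List.finite_length_le A r).subset (fun w hw => hw.2))

/-- Words of exact σ-length `s`. -/
noncomputable def exactF (s : ℕ) : Finset (List A) :=
  Set.Finite.toFinset
    (s := {w | (IsFactor x w ∧ w ≠ [] ∧ llen σ w = s) ∧ w.length ≤ s})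
    ((List.finite_length_le A s).subset (fun w hw => hw.2))

/-- The cut at level `s` in the prefix tree (last-letter crossing). -/
noncomputable def ecutF (s : ℕ) : Finset (List A) :=
  Set.Finite.toFinset
    (s := {w | (IsFactor x w ∧ w ≠ [] ∧ llen σ w.dropLast < s ∧ s ≤ llen σ w) ∧ w.length ≤ s})
    ((List.finite_length_le A s).subset (fun w hw => hw.2))

variable {σ x}

lemma mem_cutF (hσ : ∀ a, σ a ≠ []) {r : ℕ} {w : List A} :
    w ∈ cutF σ x r ↔ IsFactor x w ∧ w ≠ [] ∧ llen σ w.tail < r ∧ r ≤ llen σ w := by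
  simp only [cutF, Set.Finite.mem_toFinset, Set.mem_setOf_eq]
  constructor
  · exact fun h => h.1
  · intro h
    refine ⟨h, ?_⟩
    rcases w with _ | ⟨c, w⟩
    · simp at h
    · have h1 := len_le_llen hσ w
      have h2 : (c :: w).tail = w := rfl
      rw [h2] at h
      simp only [List.length_cons]
      omega

lemma mem_exactF (hσ : ∀ a, σ a ≠ []) {s : ℕ} {w : List A} :
    w ∈ exactF σ x s ↔ IsFactor x w ∧ w ≠ [] ∧ llen σ w = s := by
  simp only [exactF, Set.Finite.mem_toFinset, Set.mem_setOf_eq]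
  constructor
  · exact fun h => h.1
  · intro h
    refine ⟨h, ?_⟩
    have h1 := len_le_llen hσ w
    omega

lemma mem_ecutF (hσ : ∀ a, σ a ≠ []) {s : ℕ} {w : List A} :
    w ∈ ecutF σ x s ↔ IsFactor x w ∧ w ≠ [] ∧ llen σ w.dropLast < s ∧ s ≤ llen σ w := by
  simp only [ecutF, Set.Finite.mem_toFinset, Set.mem_setOf_eq]
  constructor
  · exact fun h => h.1
  · intro h
    refine ⟨h, ?_⟩
    have h1 := len_le_llen hσ w.dropLast
    have h2 : w.length = w.dropLast.length + 1 := by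
      rcases eq_or_ne w [] with rfl | hw
      · exact absurd rfl h.2.1
      · rw [List.length_dropLast]
        have := List.length_pos_iff.2 hw
        omega
    omega

lemma FR_nil_univ (hx : Function.Surjective x) : FR x ([] : List A) = Finset.univ := by
  ext c
  simp only [mem_FR, Finset.mem_univ, iff_true, List.nil_append]
  exact isFactor_of_surj hx c

/-- The cut lemma: the total weight of any first-letter cut equals `Card A - 1`. -/
lemma sum_cutF (hσ : ∀ a, σ a ≠ []) (hx : Function.Surjective x)
    (hxneu : ∀ w, IsFactor x w → mult x w = 0) {r : ℕ} (hr : 1 ≤ r) :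
    ∑ w ∈ cutF σ x r, omg x w = Fintype.card A - 1 := by
  have key : ∀ j : ℕ,
      ∑ w ∈ (LF x j).filter (fun w => llen σ w < r), omg x w
        + ∑ w ∈ (cutF σ x r).filter (fun w => w.length ≤ j), omg x w
      = Fintype.card A - 1 := by
    intro j
    induction j with
    | zero =>
      have h1 : (LF x 0).filter (fun w => llen σ w < r) = {([] : List A)} := by
        rw [LF_zero, Finset.filter_singleton, if_pos]
        show llen σ [] < r
        rw [llen_nil]
        omega
      have h2 : (cutF σ x r).filter (fun w => w.length ≤ 0) = ∅ := by
        ext w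
        simp only [Finset.mem_filter, Finset.notMem_empty, iff_false, not_and]
        intro hw hl
        have := (mem_cutF hσ).1 hw
        exact this.2.1 (List.length_eq_zero_iff.1 (Nat.le_zero.1 hl))
      rw [h1, h2, Finset.sum_singleton, Finset.sum_empty, add_zero]
      unfold omg
      rw [FR_nil_univ hx, Finset.card_univ]
    | succ j ih =>
      -- children expansion
      set SF : ℕ → Finset (List A) := fun j => (LF x j).filter (fun w => llen σ w < r) with hSF
      have hcons : ∀ v ∈ SF j, ∑ c ∈ FL x v, omg x (c :: v) = omg x v := by
        intro v hv
        have hvf : IsFactor x v := (mem_LF.1 (Finset.mem_filter.1 hv).1).1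
        exact conservation hvf (hxneu v hvf)
      have hbi : (SF j).biUnion (fun v => (FL x v).image (fun c => c :: v))
          = SF (j+1) ∪ (cutF σ x r).filter (fun w => w.length = j + 1) := by
        ext u
        simp only [Finset.mem_biUnion, Finset.mem_image, Finset.mem_union, Finset.mem_filter,
          mem_LF, mem_FL, hSF, mem_cutF hσ]
        constructor
        · rintro ⟨v, hv, c, hc, rfl⟩
          obtain ⟨⟨hvf, hvl⟩, hvr⟩ := hv
          have htail : (c :: v).tail = v := rfl
          rcases Nat.lt_or_ge (llen σ (c :: v)) r with h | h
          · exact Or.inl ⟨⟨hc, by simp [hvl]⟩, h⟩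
          · exact Or.inr ⟨⟨hc, by simp, by rw [htail]; exact hvr, h⟩, by simp [hvl]⟩
        · intro h
          have hu : IsFactor x u ∧ u.length = j + 1 ∧ llen σ u.tail < r := by
            rcases h with ⟨⟨huf, hul⟩, hur⟩ | ⟨⟨huf, hune, hut, hur⟩, hul⟩
            · refine ⟨huf, hul, ?_⟩
              rcases u with _ | ⟨c, v⟩
              · simp at hul
              · have : llen σ v ≤ llen σ (c :: v) := by rw [llen_cons]; omega
                exact lt_of_le_of_lt this hur
            · exact ⟨huf, hul, hut⟩
          rcases u with _ | ⟨c, v⟩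
          · simp at hu
          · refine ⟨v, ⟨⟨isFactor_of_cons hu.1, by simpa using hu.2.1⟩, hu.2.2⟩, c, hu.1, rfl⟩
      have hdisj1 : ∀ v ∈ SF j, ∀ v' ∈ SF j, v ≠ v' →
          Disjoint ((FL x v).image (fun c => c :: v)) ((FL x v').image (fun c => c :: v')) := by
        intro v _ v' _ hvv
        simp only [Finset.disjoint_left, Finset.mem_image]
        rintro u ⟨c, _, rfl⟩ ⟨c', _, h⟩
        exact hvv (by simpa using congrArg List.tail h.symm)
      have hsum1 : ∑ v ∈ SF j, omg x v
          = ∑ u ∈ (SF j).biUnion (fun v => (FL x v).image (fun c => c :: v)), omg x u := by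
        rw [Finset.sum_biUnion (fun v hv v' hv' hvv => hdisj1 v hv v' hv' hvv)]
        refine Finset.sum_congr rfl fun v hv => ?_
        rw [Finset.sum_image (fun c _ c' _ h => by simpa using h)]
        exact (hcons v hv).symm
      have hdisj2 : Disjoint (SF (j+1)) ((cutF σ x r).filter (fun w => w.length = j + 1)) := by
        simp only [Finset.disjoint_left, Finset.mem_filter, hSF]
        rintro u ⟨_, hur⟩ ⟨hu, _⟩
        have := ((mem_cutF hσ).1 hu).2.2.2
        omega
      have hsplit : (cutF σ x r).filter (fun w => w.length ≤ j + 1)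
          = (cutF σ x r).filter (fun w => w.length ≤ j)
            ∪ (cutF σ x r).filter (fun w => w.length = j + 1) := by
        rw [← Finset.filter_or]
        refine Finset.filter_congr fun w _ => ?_
        constructor
        · intro h; omega
        · intro h; omega
      have hdisj3 : Disjoint ((cutF σ x r).filter (fun w => w.length ≤ j))
          ((cutF σ x r).filter (fun w => w.length = j + 1)) := by
        simp only [Finset.disjoint_left, Finset.mem_filter]
        rintro u ⟨_, h1⟩ ⟨_, h2⟩
        omega
      calc ∑ w ∈ SF (j+1), omg x w
            + ∑ w ∈ (cutF σ x r).filter (fun w => w.length ≤ j + 1), omg x w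
          = ∑ w ∈ SF (j+1), omg x w
            + (∑ w ∈ (cutF σ x r).filter (fun w => w.length ≤ j), omg x w
              + ∑ w ∈ (cutF σ x r).filter (fun w => w.length = j + 1), omg x w) := by
            rw [hsplit, Finset.sum_union hdisj3]
        _ = (∑ w ∈ SF (j+1), omg x w
              + ∑ w ∈ (cutF σ x r).filter (fun w => w.length = j + 1), omg x w)
            + ∑ w ∈ (cutF σ x r).filter (fun w => w.length ≤ j), omg x w := by ring
        _ = ∑ v ∈ SF j, omg x v
            + ∑ w ∈ (cutF σ x r).filter (fun w => w.length ≤ j), omg x w := by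
            rw [hsum1, hbi, Finset.sum_union hdisj2]
        _ = Fintype.card A - 1 := ih
  have h1 : ((LF x r).filter (fun w => llen σ w < r)) = ∅ := by
    ext w
    simp only [Finset.mem_filter, Finset.notMem_empty, iff_false, not_and, mem_LF]
    rintro ⟨hwf, hwl⟩
    have := len_le_llen hσ w
    omega
  have h2 : (cutF σ x r).filter (fun w => w.length ≤ r) = cutF σ x r := by
    refine Finset.filter_true_of_mem fun w hw => ?_
    simp only [cutF, Set.Finite.mem_toFinset, Set.mem_setOf_eq] at hw
    exact hw.2
  have := key r
  rw [h1, h2, Finset.sum_empty, zero_add] at this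
  exact this

end Cut

/-! ### Weighted counting bounds -/

section Weighted

variable (σ : A → List B) (x : ℤ → A) [Fintype A]

/-- Nonempty factors of σ-length at most `S`. -/
noncomputable def nefF (S : ℕ) : Finset (List A) :=
  Set.Finite.toFinset
    (s := {w | (IsFactor x w ∧ w ≠ [] ∧ llen σ w ≤ S) ∧ w.length ≤ S})
    ((List.finite_length_le A S).subset (fun w hw => hw.2))

noncomputable def gW (s : ℕ) : ℕ := ∑ w ∈ exactF σ x s, hdl σ w * omg x w

noncomputable def fW (s : ℕ) : ℕ := ∑ w ∈ ecutF σ x s, hdl σ w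

variable {σ x}

lemma mem_nefF (hσ : ∀ a, σ a ≠ []) {S : ℕ} {w : List A} :
    w ∈ nefF σ x S ↔ IsFactor x w ∧ w ≠ [] ∧ llen σ w ≤ S := by
  simp only [nefF, Set.Finite.mem_toFinset, Set.mem_setOf_eq]
  constructor
  · exact fun h => h.1
  · intro h
    exact ⟨h, le_trans (len_le_llen hσ w) h.2.2⟩

/-- `A(S) ≤ (Card A - 1) * S`. -/
lemma sum_hdl_omg_le (hσ : ∀ a, σ a ≠ []) (hx : Function.Surjective x)
    (hxneu : ∀ w, IsFactor x w → mult x w = 0) (S : ℕ) :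
    ∑ w ∈ nefF σ x S, hdl σ w * omg x w ≤ (Fintype.card A - 1) * S := by
  have hrw : ∀ w ∈ nefF σ x S, hdl σ w * omg x w
      = ∑ r ∈ (Finset.Icc 1 S).filter
          (fun r => llen σ w.tail < r ∧ r ≤ llen σ w), omg x w := by
    intro w hw
    rw [Finset.sum_const, smul_eq_mul]
    congr 1
    have hft : (Finset.Icc 1 S).filter (fun r => llen σ w.tail < r ∧ r ≤ llen σ w)
        = Finset.Ioc (llen σ w.tail) (llen σ w) := by
      ext r
      simp only [Finset.mem_filter, Finset.mem_Icc, Finset.mem_Ioc]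
      have hls := ((mem_nefF hσ).1 hw).2.2
      omega
    rw [hft, Nat.card_Ioc]
    rfl
  rw [Finset.sum_congr rfl hrw]
  have hswap : ∑ w ∈ nefF σ x S, ∑ r ∈ (Finset.Icc 1 S).filter
        (fun r => llen σ w.tail < r ∧ r ≤ llen σ w), omg x w
      = ∑ r ∈ Finset.Icc 1 S, ∑ w ∈ (nefF σ x S).filter
        (fun w => llen σ w.tail < r ∧ r ≤ llen σ w), omg x w := by
    simp only [Finset.sum_filter]
    exact Finset.sum_comm
  rw [hswap]
  have hbound : ∀ r ∈ Finset.Icc 1 S,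
      ∑ w ∈ (nefF σ x S).filter (fun w => llen σ w.tail < r ∧ r ≤ llen σ w), omg x w
        ≤ Fintype.card A - 1 := by
    intro r hr
    rw [Finset.mem_Icc] at hr
    rw [← sum_cutF hσ hx hxneu hr.1]
    refine Finset.sum_le_sum_of_subset fun w hw => ?_
    rw [Finset.mem_filter, mem_nefF hσ] at hw
    exact (mem_cutF hσ).2 ⟨hw.1.1, hw.1.2.1, hw.2.1, hw.2.2⟩
  calc ∑ r ∈ Finset.Icc 1 S, ∑ w ∈ (nefF σ x S).filter
        (fun w => llen σ w.tail < r ∧ r ≤ llen σ w), omg x w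
      ≤ ∑ _r ∈ Finset.Icc 1 S, (Fintype.card A - 1) := Finset.sum_le_sum hbound
    _ = (Fintype.card A - 1) * S := by
        rw [Finset.sum_const, Nat.card_Icc, smul_eq_mul]
        have hS : S + 1 - 1 = S := by omega
        rw [hS, Nat.mul_comm]

/-- Decomposition of `A(S)` by exact σ-length. -/
lemma sum_hdl_omg_eq (hσ : ∀ a, σ a ≠ []) (S : ℕ) :
    ∑ w ∈ nefF σ x S, hdl σ w * omg x w = ∑ s ∈ Finset.Icc 1 S, gW σ x s := by
  have hbi : nefF σ x S = (Finset.Icc 1 S).biUnion (fun s => exactF σ x s) := by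
    ext w
    simp only [mem_nefF hσ, Finset.mem_biUnion, Finset.mem_Icc, mem_exactF hσ]
    constructor
    · rintro ⟨hwf, hwne, hwl⟩
      exact ⟨llen σ w, ⟨one_le_llen hσ hwne, hwl⟩, hwf, hwne, rfl⟩
    · rintro ⟨s, ⟨h1, h2⟩, hwf, hwne, rfl⟩
      exact ⟨hwf, hwne, h2⟩
  rw [hbi, Finset.sum_biUnion]
  · rfl
  · intro s _ s' _ hss
    simp only [Finset.disjoint_left, mem_exactF hσ]
    rintro w ⟨_, _, rfl⟩ ⟨_, _, h⟩
    exact hss h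

/-- The prefix-cut recursion: `f(s+1) = f(s) + g(s)` for `s ≥ 1`. -/
lemma fW_succ (hσ : ∀ a, σ a ≠ []) {s : ℕ} (hs : 1 ≤ s) :
    fW σ x (s + 1) = fW σ x s + gW σ x s := by
  classical
  have hpart : ecutF σ x (s+1)
      = (ecutF σ x s).filter (fun w => s + 1 ≤ llen σ w)
        ∪ (exactF σ x s).biUnion (fun w => (FR x w).image (fun c => w ++ [c])) := by
    ext u
    simp only [Finset.mem_union, Finset.mem_filter, Finset.mem_biUnion, Finset.mem_image,
      mem_ecutF hσ, mem_exactF hσ, mem_FR]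
    constructor
    · rintro ⟨huf, hune, hdl1, hll1⟩
      rcases Nat.lt_or_ge (llen σ u.dropLast) s with h | h
      · exact Or.inl ⟨⟨huf, hune, h, by omega⟩, hll1⟩
      · have hds : llen σ u.dropLast = s := by omega
        have hvne : u.dropLast ≠ [] := by
          intro hnil
          rw [hnil, llen_nil] at hds
          omega
        have hu : u.dropLast ++ [u.getLast hune] = u := List.dropLast_append_getLast hune
        refine Or.inr ⟨u.dropLast, ⟨?_, hvne, hds⟩, u.getLast hune, ?_, hu⟩
        · exact isFactor_of_concat (by rwa [hu])
        · rwa [hu]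
    · rintro (⟨⟨huf, hune, hdl1, hll1⟩, hgel⟩ | ⟨w, ⟨hwf, hwne, hwl⟩, c, hc, rfl⟩)
      · exact ⟨huf, hune, by omega, hgel⟩
      · refine ⟨hc, by simp, ?_, ?_⟩
        · rw [List.dropLast_concat, hwl]; omega
        · rw [llen_append, llen_singleton]
          have := List.length_pos_iff.2 (hσ c)
          omega
  have hdisj : Disjoint ((ecutF σ x s).filter (fun w => s + 1 ≤ llen σ w))
      ((exactF σ x s).biUnion (fun w => (FR x w).image (fun c => w ++ [c]))) := by
    simp only [Finset.disjoint_left, Finset.mem_filter, Finset.mem_biUnion, Finset.mem_image]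
    rintro u ⟨hu, _⟩ ⟨w, hw, c, _, rfl⟩
    have h1 := ((mem_ecutF hσ).1 hu).2.2.1
    have h2 := ((mem_exactF hσ).1 hw).2.2
    rw [List.dropLast_concat] at h1
    omega
  have hsum2 : ∑ u ∈ (exactF σ x s).biUnion (fun w => (FR x w).image (fun c => w ++ [c])),
      hdl σ u = ∑ w ∈ exactF σ x s, (hdl σ w + hdl σ w * omg x w) := by
    rw [Finset.sum_biUnion]
    · refine Finset.sum_congr rfl fun w hw => ?_
      have hwne := ((mem_exactF hσ).1 hw).2.1
      have hwf := ((mem_exactF hσ).1 hw).1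
      rw [Finset.sum_image (fun c _ c' _ h => by simpa using h)]
      have : ∀ c ∈ FR x w, hdl σ (w ++ [c]) = hdl σ w := fun c _ => hdl_concat hwne c
      rw [Finset.sum_congr rfl this, Finset.sum_const, smul_eq_mul]
      have hpos := FR_card_pos hwf
      unfold omg
      obtain ⟨m, hm⟩ : ∃ m, (FR x w).card = m + 1 := ⟨(FR x w).card - 1, by omega⟩
      rw [hm]
      simp only [Nat.add_sub_cancel]
      ring
    · intro w hw w' hw' hww
      simp only [Finset.disjoint_left, Finset.mem_image]
      rintro u ⟨c, _, rfl⟩ ⟨c', _, h⟩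
      apply hww
      have := congrArg List.dropLast h.symm
      simpa [List.dropLast_concat] using this
  have hsplit : ecutF σ x s = (ecutF σ x s).filter (fun w => s + 1 ≤ llen σ w)
      ∪ (ecutF σ x s).filter (fun w => llen σ w = s) := by
    rw [← Finset.filter_or]
    refine (Finset.filter_true_of_mem fun w hw => ?_).symm
    have := ((mem_ecutF hσ).1 hw).2.2.2
    omega
  have hexact : (ecutF σ x s).filter (fun w => llen σ w = s) = exactF σ x s := by
    ext w
    simp only [Finset.mem_filter, mem_ecutF hσ, mem_exactF hσ]
    constructor
    · rintro ⟨⟨h1, h2, h3, h4⟩, h5⟩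
      exact ⟨h1, h2, h5⟩
    · rintro ⟨h1, h2, rfl⟩
      have h3 := llen_dropLast_add_lstl (σ := σ) h2
      have h4 := one_le_lstl hσ h2
      exact ⟨⟨h1, h2, by omega, le_refl _⟩, rfl⟩
  have hdisj2 : Disjoint ((ecutF σ x s).filter (fun w => s + 1 ≤ llen σ w))
      ((ecutF σ x s).filter (fun w => llen σ w = s)) := by
    simp only [Finset.disjoint_left, Finset.mem_filter]
    rintro u ⟨_, h1⟩ ⟨_, h2⟩
    omega
  have hfs : fW σ x s = ∑ w ∈ (ecutF σ x s).filter (fun w => s + 1 ≤ llen σ w), hdl σ w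
      + ∑ w ∈ exactF σ x s, hdl σ w := by
    unfold fW
    conv_lhs => rw [hsplit]
    rw [Finset.sum_union hdisj2, hexact]
  have hlhs : fW σ x (s + 1)
      = ∑ w ∈ (ecutF σ x s).filter (fun w => s + 1 ≤ llen σ w), hdl σ w
        + (∑ w ∈ exactF σ x s, hdl σ w + ∑ w ∈ exactF σ x s, hdl σ w * omg x w) := by
    unfold fW
    rw [hpart, Finset.sum_union hdisj, hsum2, Finset.sum_add_distrib]
  rw [hlhs, hfs]
  unfold gW
  ring

lemma fW_one_le (hσ : ∀ a, σ a ≠ []) : fW σ x 1 ≤ Fintype.card A * width σ := by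
  have hsingle : ∀ w ∈ ecutF σ x 1, ∃ c : A, w = [c] := by
    intro w hw
    obtain ⟨hwf, hwne, hdl1, _⟩ := (mem_ecutF hσ).1 hw
    have : llen σ w.dropLast = 0 := by omega
    have hnil : w.dropLast = [] := llen_eq_zero hσ this
    have hle1 : w.length ≤ 1 := by
      have h5 := congrArg List.length hnil
      simp only [List.length_dropLast, List.length_nil] at h5
      omega
    have hpos := List.length_pos_iff.2 hwne
    rcases List.length_eq_one_iff.1 (show w.length = 1 by omega) with ⟨c, hc⟩
    exact ⟨c, hc⟩
  have hcard : (ecutF σ x 1).card ≤ Fintype.card A := by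
    have hsub : ecutF σ x 1 ⊆ Finset.univ.image (fun c : A => [c]) := by
      intro w hw
      obtain ⟨c, rfl⟩ := hsingle w hw
      exact Finset.mem_image_of_mem _ (Finset.mem_univ c)
    calc (ecutF σ x 1).card ≤ (Finset.univ.image (fun c : A => [c])).card :=
          Finset.card_le_card hsub
      _ ≤ (Finset.univ : Finset A).card := Finset.card_image_le
      _ = Fintype.card A := Finset.card_univ
  calc fW σ x 1 ≤ ∑ _w ∈ ecutF σ x 1, width σ :=
        Finset.sum_le_sum fun w _ => hdl_le_width
    _ = (ecutF σ x 1).card * width σ := by rw [Finset.sum_const, smul_eq_mul]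
    _ ≤ Fintype.card A * width σ := Nat.mul_le_mul_right _ hcard

/-- Cumulative form of the recursion. -/
lemma fW_eq_cumul (hσ : ∀ a, σ a ≠ []) (k : ℕ) :
    fW σ x (k + 1) = fW σ x 1 + ∑ s' ∈ Finset.Icc 1 k, gW σ x s' := by
  induction k with
  | zero => simp
  | succ k ih =>
    rw [fW_succ hσ (by omega : 1 ≤ k + 1), ih,
      Finset.sum_Icc_succ_top (by omega : 1 ≤ k + 1)]
    ring

/-- Final bound on `f`. -/
lemma fW_le (hσ : ∀ a, σ a ≠ []) (hx : Function.Surjective x)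
    (hxneu : ∀ w, IsFactor x w → mult x w = 0) (k : ℕ) :
    fW σ x (k + 1) ≤ Fintype.card A * width σ + (Fintype.card A - 1) * k := by
  rw [fW_eq_cumul hσ k, ← sum_hdl_omg_eq (x := x) hσ k]
  exact Nat.add_le_add (fW_one_le hσ) (sum_hdl_omg_le hσ hx hxneu k)

end Weighted

/-! ### Parsing factors of the image word -/

section Parse

variable {σ : A → List B} {x : ℤ → A} {y : ℤ → B} {t : ℤ → ℤ}

/-- The factor of `x` given by the blocks `k, k+1, ..., l`. -/
def blockWord (x : ℤ → A) (k l : ℤ) : List A :=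
  (List.range (l + 1 - k).toNat).map (fun j => x (k + (j : ℕ)))

lemma blockWord_isFactor (x : ℤ → A) (k l : ℤ) : IsFactor x (blockWord x k l) := by
  refine ⟨k, fun j => ?_⟩
  rw [List.get_eq_getElem]
  simp only [blockWord, List.getElem_map, List.getElem_range]

lemma blockWord_length (x : ℤ → A) (k l : ℤ) :
    (blockWord x k l).length = (l + 1 - k).toNat := by
  simp [blockWord]

lemma blockWord_concat {x : ℤ → A} {k l : ℤ} (h : k ≤ l) :
    blockWord x k l = blockWord x k (l - 1) ++ [x l] := by
  unfold blockWord
  have h1 : (l + 1 - k).toNat = (l - 1 + 1 - k).toNat + 1 := by omega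
  rw [h1, List.range_succ, List.map_append]
  congr 1
  simp only [List.map_cons, List.map_nil]
  congr 2
  have h2 : ((l - 1 + 1 - k).toNat : ℤ) = l - k := by omega
  rw [h2]
  ring

lemma blockWord_cons {x : ℤ → A} {k l : ℤ} (h : k ≤ l) :
    blockWord x k l = x k :: blockWord x (k + 1) l := by
  unfold blockWord
  have h1 : (l + 1 - k).toNat = (l + 1 - (k + 1)).toNat + 1 := by omega
  rw [h1, List.range_succ_eq_map, List.map_cons]
  congr 1
  · simp
  · rw [List.map_map]
    refine List.map_congr_left fun j _ => ?_
    simp only [Function.comp_apply]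
    congr 1
    push_cast
    ring

lemma blockWord_single (x : ℤ → A) (k : ℤ) : blockWord x k k = [x k] := by
  unfold blockWord
  have h1 : (k + 1 - k).toNat = 1 := by omega
  rw [h1]
  simp only [List.range_succ, List.range_zero, List.nil_append, List.map_cons, List.map_nil]
  norm_num

lemma t_mono (htlen : ∀ n : ℤ, t (n + 1) = t n + (σ (x n)).length)
    (hσ : ∀ a, σ a ≠ []) : ∀ m n : ℤ, m ≤ n → t m + (n - m) ≤ t n := by
  intro m n hmn
  refine Int.le_induction (motive := fun n _ => t m + (n - m) ≤ t n) (by omega) ?_ n hmn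
  intro n hn ih
  have h1 := htlen n
  have h2 : 1 ≤ ((σ (x n)).length : ℤ) := by
    exact_mod_cast List.length_pos_iff.2 (hσ (x n))
  omega

lemma exists_block (ht0 : t 0 = 0)
    (htlen : ∀ n : ℤ, t (n + 1) = t n + (σ (x n)).length)
    (hσ : ∀ a, σ a ≠ []) (i : ℤ) : ∃ k : ℤ, t k ≤ i ∧ i < t (k + 1) := by
  classical
  have hmono := t_mono htlen hσ
  have hne : ∃ z : ℤ, i < t z := by
    refine ⟨(i.natAbs : ℤ) + 1, ?_⟩
    have := hmono 0 ((i.natAbs : ℤ) + 1) (by positivity)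
    rw [ht0] at this
    have h2 : i < (i.natAbs : ℤ) + 1 := by
      have := Int.le_natAbs (a := i)
      omega
    omega
  have hbdd : ∃ b : ℤ, ∀ z : ℤ, i < t z → b ≤ z := by
    refine ⟨-(i.natAbs : ℤ), fun z hz => ?_⟩
    by_contra hlt
    push_neg at hlt
    have hz0 : z ≤ 0 := by
      have : (0 : ℤ) ≤ (i.natAbs : ℤ) := by positivity
      omega
    have := hmono z 0 hz0
    rw [ht0] at this
    have h2 : -(i.natAbs : ℤ) ≤ i := by
      have := Int.le_natAbs (a := -i)
      omega
    omega
  obtain ⟨lb, hlb, hmin⟩ := Int.exists_least_of_bdd hbdd hne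
  refine ⟨lb - 1, ?_, by simpa using hlb⟩
  by_contra hc
  push_neg at hc
  have := hmin (lb - 1) hc
  omega

lemma llen_blockWord (htlen : ∀ n : ℤ, t (n + 1) = t n + (σ (x n)).length)
    (k : ℤ) : ∀ l : ℤ, k ≤ l →
    (llen σ (blockWord x k l) : ℤ) = t (l + 1) - t k := by
  intro l hl
  refine Int.le_induction
    (motive := fun l _ => (llen σ (blockWord x k l) : ℤ) = t (l + 1) - t k) ?_ ?_ l hl
  · show (llen σ (blockWord x k k) : ℤ) = t (k + 1) - t k
    rw [blockWord_single, llen_singleton, htlen k]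
    ring
  · intro n hn ih
    have ih' : (llen σ (blockWord x k n) : ℤ) = t (n + 1) - t k := ih
    show (llen σ (blockWord x k (n + 1)) : ℤ) = t (n + 1 + 1) - t k
    rw [blockWord_concat (by omega : k ≤ n + 1)]
    rw [llen_append, llen_singleton]
    push_cast
    have h2 : n + 1 - 1 = n := by ring
    rw [h2, ih', htlen (n + 1)]
    push_cast
    ring

lemma appw_single (σ : A → List B) (c : A) : appw σ [c] = σ c := by simp [appw]

lemma appw_append (σ : A → List B) (u v : List A) :
    appw σ (u ++ v) = appw σ u ++ appw σ v := by simp [appw]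

lemma y_eq_blockWord (htlen : ∀ n : ℤ, t (n + 1) = t n + (σ (x n)).length)
    (hblock : ∀ (n : ℤ) (j : Fin (σ (x n)).length), y (t n + (j : ℕ)) = (σ (x n)).get j)
    (k : ℤ) : ∀ l : ℤ, k ≤ l → ∀ (m : ℕ) (hm : m < (appw σ (blockWord x k l)).length),
      y (t k + (m : ℕ)) = (appw σ (blockWord x k l))[m]'hm := by
  intro l hl
  refine Int.le_induction
    (motive := fun l _ => ∀ (m : ℕ) (hm : m < (appw σ (blockWord x k l)).length),
      y (t k + (m : ℕ)) = (appw σ (blockWord x k l))[m]'hm) ?_ ?_ l hl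
  · intro m hm
    have hm' : m < (σ (x k)).length := by
      rwa [blockWord_single, appw_single] at hm
    have := hblock k ⟨m, hm'⟩
    simp only [List.get_eq_getElem] at this
    rw [this]
    have hb : appw σ (blockWord x k k) = σ (x k) := by rw [blockWord_single, appw_single]
    exact List.getElem_of_eq hb.symm hm'
  · intro n hn ih m hm
    have hrw : appw σ (blockWord x k (n + 1))
        = appw σ (blockWord x k n) ++ σ (x (n + 1)) := by
      rw [blockWord_concat (by omega : k ≤ n + 1)]
      have h2 : n + 1 - 1 = n := by ring
      rw [h2, appw_append, appw_single]
    have hm2 : m < (appw σ (blockWord x k n)).length + (σ (x (n + 1))).length := by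
      rw [hrw, List.length_append] at hm
      exact hm
    rcases Nat.lt_or_ge m (appw σ (blockWord x k n)).length with hlt | hge
    · have := ih m hlt
      rw [this]
      rw [List.getElem_of_eq hrw hm]
      rw [List.getElem_append_left hlt]
    · have hidx : m - (appw σ (blockWord x k n)).length < (σ (x (n + 1))).length := by
        omega
      have hb := hblock (n + 1) ⟨m - (appw σ (blockWord x k n)).length, hidx⟩
      simp only [List.get_eq_getElem] at hb
      have hlen : (llen σ (blockWord x k n) : ℤ) = t (n + 1) - t k :=
        llen_blockWord htlen k n hn
      have hteq : t k + (m : ℕ) = t (n + 1) + ((m - (appw σ (blockWord x k n)).length : ℕ) : ℤ) := by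
        have : llen σ (blockWord x k n) = (appw σ (blockWord x k n)).length := rfl
        rw [this] at hlen
        push_cast [hge]
        omega
      rw [hteq, hb]
      rw [List.getElem_of_eq hrw hm]
      rw [List.getElem_append_right hge]

/-- The parse of a factor of `y`: it is a window in the image of a factor of `x`. -/
lemma factor_parse (ht0 : t 0 = 0)
    (htlen : ∀ n : ℤ, t (n + 1) = t n + (σ (x n)).length)
    (hblock : ∀ (n : ℤ) (j : Fin (σ (x n)).length), y (t n + (j : ℕ)) = (σ (x n)).get j)
    (hσ : ∀ a, σ a ≠ []) {v : List B} {n : ℕ}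
    (hv : IsFactor y v) (hn : v.length = n) (h1 : 1 ≤ n) :
    ∃ (w : List A) (o : ℕ), IsFactor x w ∧ w ≠ [] ∧ o < hdl σ w ∧
      llen σ w.dropLast < o + n ∧ o + n ≤ llen σ w ∧
      v = ((appw σ w).drop o).take n := by
  obtain ⟨i, hi⟩ := hv
  obtain ⟨k, hk1, hk2⟩ := exists_block ht0 htlen hσ i
  obtain ⟨l, hl1, hl2⟩ := exists_block ht0 htlen hσ (i + n - 1)
  have hmono := t_mono htlen hσ
  have hkl : k ≤ l := by
    by_contra hc
    push_neg at hc
    have := hmono (l + 1) k (by omega)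
    omega
  set w := blockWord x k l with hw
  have hwf := blockWord_isFactor x k l
  have hwne : w ≠ [] := by
    have hlen := blockWord_length x k l
    intro hnil
    rw [← hw, hnil] at hlen
    simp at hlen
    omega
  have hllen : (llen σ w : ℤ) = t (l + 1) - t k := llen_blockWord htlen k l hkl
  have hklen := htlen k
  have hok : (0 : ℤ) ≤ i - t k := by omega
  set o := (i - t k).toNat with hodef
  have ho : (o : ℤ) = i - t k := by omega
  have hhdl : hdl σ w = (σ (x k)).length := by
    rw [hw, blockWord_cons hkl, hdl_cons]
  have holt : o < hdl σ w := by
    rw [hhdl]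
    omega
  have honle : o + n ≤ llen σ w := by
    have : (o : ℤ) + n ≤ llen σ w := by
      rw [ho, hllen]
      omega
    exact_mod_cast this
  have hdrop : llen σ w.dropLast < o + n := by
    rcases eq_or_lt_of_le hkl with rfl | hkl'
    · rw [hw, blockWord_single]
      simp only [List.dropLast_singleton, llen_nil]
      omega
    · have hw2 : w = blockWord x k (l - 1) ++ [x l] := blockWord_concat hkl
      have hdl2 : w.dropLast = blockWord x k (l - 1) := by
        rw [hw2, List.dropLast_concat]
      have hllen2 : (llen σ w.dropLast : ℤ) = t l - t k := by
        rw [hdl2]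
        have := llen_blockWord htlen k (l - 1) (by omega)
        have h3 : l - 1 + 1 = l := by ring
        rwa [h3] at this
      have : (llen σ w.dropLast : ℤ) < (o : ℤ) + n := by
        rw [hllen2, ho]
        omega
      exact_mod_cast this
  refine ⟨w, o, hwf, hwne, holt, hdrop, honle, ?_⟩
  have hlenv : (((appw σ w).drop o).take n).length = n := by
    simp only [List.length_take, List.length_drop]
    have : llen σ w = (appw σ w).length := rfl
    omega
  refine List.ext_getElem (by omega) ?_
  intro j hj hj'
  have hjn : j < n := by omega
  have hoj : o + j < (appw σ w).length := by
    have : llen σ w = (appw σ w).length := rfl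
    omega
  have hyv := hi ⟨j, by omega⟩
  simp only [List.get_eq_getElem] at hyv
  have hblk := y_eq_blockWord htlen hblock k l hkl (o + j) hoj
  have hteq : t k + ((o + j : ℕ) : ℤ) = i + (j : ℕ) := by
    push_cast
    omega
  rw [hteq] at hblk
  rw [← hyv, hblk]
  rw [List.getElem_take, List.getElem_drop]

end Parse

/-! ### Counting factors of the image -/

section Count

variable {σ : A → List B} {x : ℤ → A} {y : ℤ → B} {t : ℤ → ℤ} [Fintype A] [Fintype B]

lemma trip_card (σ : A → List B) (x : ℤ → A) (M : ℕ) :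
    ((nefF σ x M).sigma (fun w => (Finset.range (hdl σ w))
        ×ˢ (Finset.Ioc (llen σ w.dropLast) (llen σ w)))).card
      = ∑ w ∈ nefF σ x M, hdl σ w * lstl σ w := by
  rw [Finset.card_sigma]
  refine Finset.sum_congr rfl fun w _ => ?_
  rw [Finset.card_product, Finset.card_range, Nat.card_Ioc]
  rfl

lemma sum_hdl_lstl_le (hσ : ∀ a, σ a ≠ []) (M : ℕ) :
    ∑ w ∈ nefF σ x M, hdl σ w * lstl σ w ≤ ∑ s ∈ Finset.Icc 1 M, fW σ x s := by
  have hrw : ∀ w ∈ nefF σ x M, hdl σ w * lstl σ w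
      = ∑ s ∈ (Finset.Icc 1 M).filter
          (fun s => llen σ w.dropLast < s ∧ s ≤ llen σ w), hdl σ w := by
    intro w hw
    rw [Finset.sum_const, smul_eq_mul]
    have hft : (Finset.Icc 1 M).filter (fun s => llen σ w.dropLast < s ∧ s ≤ llen σ w)
        = Finset.Ioc (llen σ w.dropLast) (llen σ w) := by
      ext s
      simp only [Finset.mem_filter, Finset.mem_Icc, Finset.mem_Ioc]
      have hls := ((mem_nefF hσ).1 hw).2.2
      omega
    rw [hft, Nat.card_Ioc, Nat.mul_comm]
    rfl
  rw [Finset.sum_congr rfl hrw]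
  have hswap : ∑ w ∈ nefF σ x M, ∑ s ∈ (Finset.Icc 1 M).filter
        (fun s => llen σ w.dropLast < s ∧ s ≤ llen σ w), hdl σ w
      = ∑ s ∈ Finset.Icc 1 M, ∑ w ∈ (nefF σ x M).filter
        (fun w => llen σ w.dropLast < s ∧ s ≤ llen σ w), hdl σ w := by
    simp only [Finset.sum_filter]
    exact Finset.sum_comm
  rw [hswap]
  refine Finset.sum_le_sum fun s hs => ?_
  refine Finset.sum_le_sum_of_subset fun w hw => ?_
  rw [Finset.mem_filter, mem_nefF hσ] at hw
  exact (mem_ecutF hσ).2 ⟨hw.1.1, hw.1.2.1, hw.2.1, hw.2.2⟩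

/-- The main counting inequality. -/
lemma image_count_le (ht0 : t 0 = 0)
    (htlen : ∀ n : ℤ, t (n + 1) = t n + (σ (x n)).length)
    (hblock : ∀ (n : ℤ) (j : Fin (σ (x n)).length), y (t n + (j : ℕ)) = (σ (x n)).get j)
    (hσ : ∀ a, σ a ≠ []) (N : ℕ) :
    ∑ n ∈ Finset.Icc 1 N, (LF y n).card
      ≤ ∑ w ∈ nefF σ x (N + 2 * width σ), hdl σ w * lstl σ w := by
  classical
  set M := N + 2 * width σ with hM
  set S : Finset ((_ : ℕ) × List B) := (Finset.Icc 1 N).sigma (fun n => LF y n) with hS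
  have hcard : ∑ n ∈ Finset.Icc 1 N, (LF y n).card = S.card := (Finset.card_sigma _ _).symm
  rw [hcard, ← trip_card σ x M]
  have parse : ∀ p : (_ : ℕ) × List B, p ∈ S →
      ∃ (w : List A) (o : ℕ), IsFactor x w ∧ w ≠ [] ∧ o < hdl σ w ∧
        llen σ w.dropLast < o + p.1 ∧ o + p.1 ≤ llen σ w ∧
        p.2 = ((appw σ w).drop o).take p.1 := by
    rintro ⟨n, v⟩ hp
    rw [hS, Finset.mem_sigma, Finset.mem_Icc, mem_LF] at hp
    exact factor_parse ht0 htlen hblock hσ hp.2.1 hp.2.2 hp.1.1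
  choose W O hW using parse
  set F : ((_ : ℕ) × List B) → ((_ : List A) × ℕ × ℕ) := fun p =>
    if h : p ∈ S then ⟨W p h, (O p h, O p h + p.1)⟩ else ⟨[], (0, 0)⟩ with hF
  refine Finset.card_le_card_of_injOn F ?_ ?_
  · rintro p (hp : p ∈ S)
    rw [hF]
    simp only [dif_pos hp]
    obtain ⟨hwf, hwne, ho, hd1, hd2, hv⟩ := hW p hp
    have hn : p.1 ≤ N ∧ 1 ≤ p.1 := by
      rw [hS, Finset.mem_sigma, Finset.mem_Icc] at hp
      exact ⟨hp.1.2, hp.1.1⟩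
    rw [Finset.mem_coe, Finset.mem_sigma]
    dsimp only
    constructor
    · rw [mem_nefF hσ]
      refine ⟨hwf, hwne, ?_⟩
      have heq := llen_dropLast_add_lstl (σ := σ) hwne
      have h1 : hdl σ (W p hp) ≤ width σ := hdl_le_width
      have h2 : lstl σ (W p hp) ≤ width σ := lstl_le_width
      omega
    · rw [Finset.mem_product, Finset.mem_range, Finset.mem_Ioc]
      exact ⟨ho, hd1, hd2⟩
  · intro p hp p' hp' hFeq
    have hp2 : p ∈ S := hp
    have hp2' : p' ∈ S := hp'
    rw [hF] at hFeq
    simp only [dif_pos hp2, dif_pos hp2'] at hFeq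
    obtain ⟨hwf, hwne, ho, hd1, hd2, hv⟩ := hW p hp2
    obtain ⟨hwf', hwne', ho', hd1', hd2', hv'⟩ := hW p' hp2'
    have hw : W p hp2 = W p' hp2' := congrArg (fun q => q.1) hFeq
    have hpair : (O p hp2, O p hp2 + p.1) = (O p' hp2', O p' hp2' + p'.1) := by
      have := congrArg (fun q : (_ : List A) × ℕ × ℕ => q.2) hFeq
      exact this
    have hO : O p hp2 = O p' hp2' := congrArg Prod.fst hpair
    have hOn : O p hp2 + p.1 = O p' hp2' + p'.1 := congrArg Prod.snd hpair
    have hn : p.1 = p'.1 := by omega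
    have hvv : p.2 = p'.2 := by
      rw [hv, hv', hw, hO, hn]
    rcases p with ⟨n, v⟩
    rcases p' with ⟨n', v'⟩
    simp only at hn hvv
    subst hn
    subst hvv
    rfl

end Count

/-! ### Gauss sums -/

lemma gauss_one (N : ℕ) : 2 * (∑ n ∈ Finset.Icc 1 N, n) = N * (N + 1) := by
  induction N with
  | zero => simp
  | succ N ih =>
    rw [Finset.sum_Icc_succ_top (by omega : 1 ≤ N + 1), Nat.mul_add, ih]
    ring

lemma gauss_two (M : ℕ) : 2 * (∑ s ∈ Finset.Icc 1 M, (s - 1)) = M * (M - 1) := by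
  induction M with
  | zero => simp
  | succ M ih =>
    rw [Finset.sum_Icc_succ_top (by omega : 1 ≤ M + 1), Nat.mul_add, ih]
    simp only [Nat.add_sub_cancel]
    cases M with
    | zero => simp
    | succ m =>
      simp only [Nat.succ_sub_one]
      ring

end Stmt8

open Stmt8

theorem stmt8' [Fintype A] [Fintype B] (hA : 2 ≤ Fintype.card A) (hB : 2 ≤ Fintype.card B)
    (σ : A → List B) (hne : ∀ a, σ a ≠ []) (hcov : ∀ b, ∃ a, b ∈ σ a)
    (x : ℤ → A) (hx : Function.Surjective x)
    (hxneu : ∀ w, IsFactor x w → mult x w = 0)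
    (y : ℤ → B) (hy : IsImage σ x y) (hysurj : Function.Surjective y)
    (hyneu : ∀ w, IsFactor y w → mult y w = 0) :
    Fintype.card B ≤ Fintype.card A := by
  classical
  by_contra hba
  push_neg at hba
  obtain ⟨t, ht0, htlen, hblock⟩ := hy
  set a := Fintype.card A with hadef
  set b := Fintype.card B with hbdef
  set K := width σ with hKdef
  have hK1 : 1 ≤ K := by
    obtain ⟨a0⟩ : Nonempty A := Fintype.card_pos_iff.1 (by omega)
    calc 1 ≤ (σ a0).length := List.length_pos_iff.2 (hne a0)
      _ ≤ K := by
          rw [hKdef]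
          unfold width
          exact Finset.le_sup (f := fun a => (σ a).length) (Finset.mem_univ a0)
  set N := 20 * a * K * K with hNdef
  set M := N + 2 * K with hMdef
  -- y-side: exact complexity
  have hy1 : ∀ n : ℕ, (LF y n).card = (b - 1) * n + 1 :=
    fun n => card_LF_formula hysurj hyneu n
  -- the chain of inequalities
  have hchain : ∑ n ∈ Finset.Icc 1 N, (LF y n).card
      ≤ ∑ s ∈ Finset.Icc 1 M, (a * K + (a - 1) * (s - 1)) := by
    refine le_trans (image_count_le ht0 htlen hblock hne N) ?_
    refine le_trans (sum_hdl_lstl_le hne M) ?_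
    refine Finset.sum_le_sum fun s hs => ?_
    have hs1 : 1 ≤ s := (Finset.mem_Icc.1 hs).1
    obtain ⟨k, rfl⟩ : ∃ k, s = k + 1 := ⟨s - 1, by omega⟩
    have := fW_le hne hx hxneu k
    simpa using this
  -- compute both sides
  have hL : ∑ n ∈ Finset.Icc 1 N, (LF y n).card
      = (b - 1) * (∑ n ∈ Finset.Icc 1 N, n) + N := by
    rw [Finset.sum_congr rfl (fun n _ => hy1 n), Finset.sum_add_distrib,
      Finset.sum_const, Nat.card_Icc, ← Finset.mul_sum]
    have hN1 : N + 1 - 1 = N := by omega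
    rw [hN1, smul_eq_mul, mul_one]
  have hR : ∑ s ∈ Finset.Icc 1 M, (a * K + (a - 1) * (s - 1))
      = a * K * M + (a - 1) * (∑ s ∈ Finset.Icc 1 M, (s - 1)) := by
    rw [Finset.sum_add_distrib, Finset.sum_const, Nat.card_Icc, ← Finset.mul_sum]
    congr 1
    have : M + 1 - 1 = M := by omega
    rw [this, smul_eq_mul, Nat.mul_comm]
  rw [hL, hR] at hchain
  -- numeric contradiction
  have hg1 := gauss_one N
  have hg2 := gauss_two M
  have hchain2 : (b - 1) * (2 * (∑ n ∈ Finset.Icc 1 N, n)) + 2 * N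
      ≤ 2 * (a * K * M) + (a - 1) * (2 * (∑ s ∈ Finset.Icc 1 M, (s - 1))) := by
    nlinarith [hchain]
  rw [hg1, hg2] at hchain2
  have hb1 : a ≤ b - 1 := by omega
  have ha1 : 1 ≤ a - 1 := by omega
  obtain ⟨a1, ha1e⟩ : ∃ a1, a = a1 + 1 := ⟨a - 1, by omega⟩
  obtain ⟨m1, hm1e⟩ : ∃ m1, M = m1 + 1 := ⟨M - 1, by omega⟩
  have hfinal : a * (N * (N + 1)) + 2 * N ≤ 2 * (a * K * M) + a1 * (M * m1) := by
    have h6 : (b - 1) * (N * (N + 1)) ≥ a * (N * (N + 1)) :=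
      Nat.mul_le_mul_right _ hb1
    have h7 : a - 1 = a1 := by omega
    have h8 : M - 1 = m1 := by omega
    rw [h7, h8] at hchain2
    omega
  -- reduce to a polynomial inequality
  have e1 : a1 * (M * m1) ≤ a1 * (M * M) :=
    Nat.mul_le_mul_left _ (Nat.mul_le_mul_left _ (by omega))
  have e2 : a1 * (M * M) = a1 * (N * N) + 4 * (a1 * (K * N)) + 4 * (a1 * (K * K)) := by
    rw [hMdef]
    ring
  have e4 : a * (N * (N + 1)) = a1 * (N * N) + N * N + a * N := by
    rw [ha1e]
    ring
  have e3 : 2 * (a * K * M) = 2 * (a * K * N) + 4 * (a * (K * K)) := by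
    rw [hMdef]
    ring
  have e6 : a1 * (K * N) ≤ a * (K * N) := Nat.mul_le_mul_right _ (by omega)
  have e7 : a1 * (K * K) ≤ a * (K * K) := Nat.mul_le_mul_right _ (by omega)
  have e8 : 2 * (a * K * N) = 2 * (a * (K * N)) := by ring
  have hred : N * N + a * N + 2 * N ≤ 6 * (a * (K * N)) + 8 * (a * (K * K)) := by
    linarith [hfinal, e1, e2, e3, e4, e6, e7, e8]
  -- but N = 20 a K K makes this impossible
  have hNpos : 1 ≤ N := by
    have h0 : 0 < 20 * a * K * K := by
      apply Nat.mul_pos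
      apply Nat.mul_pos
      apply Nat.mul_pos
      all_goals omega
    omega
  have f1 : N * N = 12 * (a * (K * K)) * N + 8 * (a * (K * K)) * N := by
    conv_lhs => rw [hNdef]
    ring
  have f2 : 6 * (a * (K * N)) ≤ 12 * (a * (K * K)) * N := by
    have : 6 * (a * (K * N)) = 6 * (a * K) * N := by ring
    rw [this]
    have h12 : 12 * (a * (K * K)) * N = 12 * (a * K) * K * N := by ring
    rw [h12]
    refine Nat.mul_le_mul_right _ ?_
    calc 6 * (a * K) ≤ 12 * (a * K) := by omega
      _ ≤ 12 * (a * K) * K := Nat.le_mul_of_pos_right _ (by omega)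
  have f3 : 8 * (a * (K * K)) ≤ 8 * (a * (K * K)) * N :=
    Nat.le_mul_of_pos_right _ (by omega)
  have f4 : 6 * (a * (K * N)) + 8 * (a * (K * K)) ≤ N * N := by
    rw [f1]
    omega
  -- contradiction: N*N + aN + 2N ≤ N*N with N ≥ 1
  have hcontra : a * N + 2 * N ≤ 0 := by omega
  have : 2 * N > 0 := by omega
  omega

theorem stmt8 [Fintype A] [Fintype B] (hA : 2 ≤ Fintype.card A) (hB : 2 ≤ Fintype.card B)
    (σ : A → List B) (hne : ∀ a, σ a ≠ []) (hcov : ∀ b, ∃ a, b ∈ σ a)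
    (x : ℤ → A) (hx : Function.Surjective x)
    (hxneu : ∀ w, IsFactor x w → mult x w = 0)
    (y : ℤ → B) (hy : IsImage σ x y) (hysurj : Function.Surjective y)
    (hyneu : ∀ w, IsFactor y w → mult y w = 0) :
    Fintype.card B ≤ Fintype.card A :=
  stmt8' hA hB σ hne hcov x hx hxneu y hy hysurj hyneu
end

section
/- Let σ : A* → B* be a non-erasing morphism. For any word p ∈ B* and letter a ∈ A, p is a prefix of the right-infinite word σ(a)^ω if and only if p is a proper prefix of σ(a)p. Moreover, the following are equivalent: (i) p is a prefix of σ(a)^ω for every letter a ∈ A; (ii) p is a prefix of σ(w)p for every w ∈ A*; (iii) there exists N ≥ 0 such that p is a prefix of σ(w) for every w ∈ A* with |w| ≥ N. -/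
open List

variable {A : Type*} {B : Type*} {C : Type*}

/-- `p` is a prefix of the right-infinite word `u^ω = uuu⋯`. -/
def PrefOmega (p u : List B) : Prop := ∃ n : ℕ, p <+: (List.replicate n u).flatten

/-- `s` is a suffix of the left-infinite word `^ωu = ⋯uuu`. -/
def SuffOmega (s u : List B) : Prop := ∃ n : ℕ, s <:+ (List.replicate n u).flatten

/-- `p` is the longest common prefix `p_σ` of the right-infinite words `σ(a)^ω`. -/
def IsPSigma (σ : A → List B) (p : List B) : Prop :=
  (∀ a, PrefOmega p (σ a)) ∧ ∀ q : List B, (∀ a, PrefOmega q (σ a)) → q.length ≤ p.length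

/-- `s` is the longest common suffix `s_σ` of the left-infinite words `^ωσ(a)`. -/
def IsSSigma (σ : A → List B) (s : List B) : Prop :=
  (∀ a, SuffOmega s (σ a)) ∧ ∀ q : List B, (∀ a, SuffOmega q (σ a)) → q.length ≤ s.length

/-!
Iterating `p <+: u ++ p` gives `p <+: uⁿ ++ p` for every `n`, and once `|uⁿ| ≥ |p|` this makes `p`
a prefix of `uⁿ`. Conversely, if `p <+: uⁿ` then both `p` and `u ++ p` are prefixes of `uⁿ⁺¹`,
and the shorter one is a prefix of the longer. The same iteration along the letters of `w` gives
`p <+: σ(w) ++ p`, hence `p <+: σ(w)` as soon as `|w| ≥ |p|`, since `σ` is non-erasing.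
-/

namespace List

variable {α : Type*}

theorem IsPrefix.prefix_append_of_prefix {p u q : List α} (hp : p <+: u ++ p) (hq : p <+: q) :
    p <+: u ++ q :=
  hp.trans ((prefix_append_right_inj u).2 hq)

theorem IsPrefix.prefix_flatten_replicate_append {p u : List α} (hp : p <+: u ++ p) (n : ℕ) :
    p <+: (replicate n u).flatten ++ p := by
  induction n with
  | zero => simp
  | succ n ih =>
    rw [replicate_succ, flatten_cons, append_assoc]
    exact hp.prefix_append_of_prefix ih

end List

open List

theorem prefOmega_iff_prefix_append {p u : List B} (hu : u ≠ []) :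
    PrefOmega p u ↔ p <+: u ++ p := by
  constructor
  · rintro ⟨n, hn⟩
    have h_pref : p <+: (replicate (n + 1) u).flatten := by
      rw [replicate_succ', flatten_append]
      exact hn.trans (prefix_append _ _)
    have h_shift : u ++ p <+: (replicate (n + 1) u).flatten := by
      rw [replicate_succ, flatten_cons]
      exact (prefix_append_right_inj u).2 hn
    exact prefix_of_prefix_length_le h_pref h_shift (by simp)
  · intro hp
    refine ⟨p.length, prefix_of_prefix_length_le (hp.prefix_flatten_replicate_append p.length)
      (prefix_append _ _) ?_⟩
    have hu_len : 1 ≤ u.length := length_pos_iff.2 hu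
    simpa using Nat.le_mul_of_pos_right p.length hu_len

theorem prefOmega_iff_prefix_append_ne {p u : List B} (hu : u ≠ []) :
    PrefOmega p u ↔ p <+: u ++ p ∧ p ≠ u ++ p := by
  rw [prefOmega_iff_prefix_append hu]
  refine ⟨fun hp => ⟨hp, fun h => hu ?_⟩, And.left⟩
  simpa using congrArg length h

@[simp]
theorem appw_nil (σ : A → List B) : appw σ [] = [] := rfl

@[simp]
theorem appw_cons (σ : A → List B) (a : A) (w : List A) : appw σ (a :: w) = σ a ++ appw σ w :=
  rfl

@[simp]
theorem appw_replicate (σ : A → List B) (n : ℕ) (a : A) :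
    appw σ (replicate n a) = (replicate n (σ a)).flatten := by
  simp [appw, map_replicate]

theorem length_le_length_appw {σ : A → List B} (hne : ∀ a, σ a ≠ []) (w : List A) :
    w.length ≤ (appw σ w).length := by
  induction w with
  | nil => simp
  | cons a w ih =>
    have ha : 1 ≤ (σ a).length := length_pos_iff.2 (hne a)
    simp only [appw_cons, length_append, length_cons]
    omega

theorem forall_prefOmega_iff_forall_prefix_appw_append {σ : A → List B} (hne : ∀ a, σ a ≠ [])
    {p : List B} : (∀ a, PrefOmega p (σ a)) ↔ ∀ w : List A, p <+: appw σ w ++ p := by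
  refine ⟨fun h w => ?_, fun h a => (prefOmega_iff_prefix_append (hne a)).2 (by simpa using h [a])⟩
  induction w with
  | nil => simp
  | cons a w ih =>
    rw [appw_cons, append_assoc]
    exact ((prefOmega_iff_prefix_append (hne a)).1 (h a)).prefix_append_of_prefix ih

theorem forall_prefOmega_iff_exists_prefix_appw {σ : A → List B} (hne : ∀ a, σ a ≠ [])
    {p : List B} :
    (∀ a, PrefOmega p (σ a)) ↔ ∃ N : ℕ, ∀ w : List A, N ≤ w.length → p <+: appw σ w := by
  constructor
  · refine fun h => ⟨p.length, fun w hw => ?_⟩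
    refine prefix_of_prefix_length_le
      ((forall_prefOmega_iff_forall_prefix_appw_append hne).1 h w) (prefix_append _ _) ?_
    exact hw.trans (length_le_length_appw hne w)
  · rintro ⟨N, hN⟩ a
    exact ⟨N, by simpa using hN (replicate N a) (by simp)⟩

theorem stmt10_general (σ : A → List B) (hne : ∀ a, σ a ≠ []) (p : List B) :
    (∀ a : A, (PrefOmega p (σ a) ↔ (p <+: σ a ++ p ∧ p ≠ σ a ++ p))) ∧
    ((∀ a : A, PrefOmega p (σ a)) ↔ (∀ w : List A, p <+: appw σ w ++ p)) ∧
    ((∀ a : A, PrefOmega p (σ a)) ↔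
      (∃ N : ℕ, ∀ w : List A, N ≤ w.length → p <+: appw σ w)) :=
  ⟨fun a => prefOmega_iff_prefix_append_ne (hne a),
    forall_prefOmega_iff_forall_prefix_appw_append hne,
    forall_prefOmega_iff_exists_prefix_appw hne⟩

theorem stmt10 [Fintype A] [Fintype B] (hA : 2 ≤ Fintype.card A) (hB : 2 ≤ Fintype.card B)
    (σ : A → List B) (hne : ∀ a, σ a ≠ []) (hcov : ∀ b, ∃ a, b ∈ σ a)
    (p : List B) :
    (∀ a : A, (PrefOmega p (σ a) ↔ (p <+: σ a ++ p ∧ p ≠ σ a ++ p))) ∧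
    ((∀ a : A, PrefOmega p (σ a)) ↔ (∀ w : List A, p <+: appw σ w ++ p)) ∧
    ((∀ a : A, PrefOmega p (σ a)) ↔
      (∃ N : ℕ, ∀ w : List A, N ≤ w.length → p <+: appw σ w)) :=
  stmt10_general σ hne p
end
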